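/- arXiv:1602.04908 — 4 statements merged into one kernel-verified Lean document; each statement's English description precedes it below -/
import Mathlib

section
/- Let C and D be categories and let (S, R) make C a category with Cerf decompositions. Suppose given a map F₀ from objects of C to objects of D and, for each simple morphism f : a ⟶ b in S, a morphism F₁(f) : F₀(a) ⟶ F₀(b) in D, such that for every pair of chains ((f₁, …, f_k), (g₁, …, g_l)) in R one has F₁(f₁) ≫ ⋯ ≫ F₁(f_k) = F₁(g₁) ≫ ⋯ ≫ F₁(g_l) in D. Then there exists a unique functor F : C ⥤ D with F(a) = F₀(a) for every object a and F(f) = F₁(f) for every simple morphism f ∈ S. -/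
open CategoryTheory

universe v u v' u'

variable {C : Type u} [Category.{v} C]

/-- Composable chains of morphisms of `C` from `a` to `b`, all of whose entries are *simple*,
i.e. belong to the family `S`. -/
inductive CerfChain (S : ∀ ⦃a b : C⦄, (a ⟶ b) → Prop) : C → C → Type (max u v)
  | nil (a : C) : CerfChain S a a
  | cons {a b c : C} (f : a ⟶ b) (hf : S f) (p : CerfChain S b c) : CerfChain S a c

namespace CerfChain

variable {S : ∀ ⦃a b : C⦄, (a ⟶ b) → Prop}

/-- The composite in `C` of a composable chain (the identity for the empty chain). -/
def comp : ∀ {a b : C}, CerfChain S a b → (a ⟶ b)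
  | _, _, nil a => 𝟙 a
  | _, _, cons f _ p => f ≫ p.comp

/-- Concatenation of composable chains. -/
def append : ∀ {a b c : C}, CerfChain S a b → CerfChain S b c → CerfChain S a c
  | _, _, _, nil _, q => q
  | _, _, _, cons f hf p, q => cons f hf (p.append q)

/-- The image of a chain under object data `F₀` and simple-morphism data `F₁`, composed
in `D`. -/
def mapComp {D : Type u'} [Category.{v'} D] (F₀ : C → D)
    (F₁ : ∀ {a b : C} (f : a ⟶ b), S f → (F₀ a ⟶ F₀ b)) :
    ∀ {a b : C}, CerfChain S a b → (F₀ a ⟶ F₀ b)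
  | _, _, nil a => 𝟙 (F₀ a)
  | _, _, cons f hf p => F₁ f hf ≫ p.mapComp F₀ F₁

end CerfChain

namespace CerfChain

variable {S : ∀ ⦃a b : C⦄, (a ⟶ b) → Prop}

lemma comp_append : ∀ {a b c : C} (p : CerfChain S a b) (q : CerfChain S b c),
    (p.append q).comp = p.comp ≫ q.comp
  | _, _, _, nil _, q => by simp [append, comp]
  | _, _, _, cons f hf p, q => by
      simp [append, comp, comp_append p q]

lemma mapComp_append {D : Type u'} [Category.{v'} D] (F₀ : C → D)
    (F₁ : ∀ {a b : C} (f : a ⟶ b), S f → (F₀ a ⟶ F₀ b)) :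
    ∀ {a b c : C} (p : CerfChain S a b) (q : CerfChain S b c),
    (p.append q).mapComp F₀ F₁ = p.mapComp F₀ F₁ ≫ q.mapComp F₀ F₁
  | _, _, _, nil _, q => by simp [append, mapComp]
  | _, _, _, cons f hf p, q => by
      simp [append, mapComp, mapComp_append F₀ F₁ p q]

end CerfChain

/-- An elementary Cerf move: replace one contiguous subchain by another, according to a
pair in `R`. -/
def CerfElemMove {S : ∀ ⦃a b : C⦄, (a ⟶ b) → Prop}
    (R : ∀ ⦃a b : C⦄, CerfChain S a b → CerfChain S a b → Prop)
    ⦃a b : C⦄ (p q : CerfChain S a b) : Prop :=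
  ∃ (u v : C) (p₁ : CerfChain S a u) (r r' : CerfChain S u v) (p₂ : CerfChain S v b),
    R r r' ∧ p = p₁.append (r.append p₂) ∧ q = p₁.append (r'.append p₂)

/-- if `(S, R)` makes `C` a category with Cerf decompositions and
`(F₀, F₁)` is a Cerf-compatible partial functor to `D` (i.e. it sends the two chains of every
local Cerf move in `R` to chains with equal composites in `D`), then there is a unique
functor `F : C ⥤ D` with `F.obj a = F₀ a` for every object `a` and `F.map f = F₁ f` for
every simple morphism `f ∈ S`. -/
theorem exists_unique_extension_functor
    {D : Type u'} [Category.{v'} D]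
    (S : ∀ ⦃a b : C⦄, (a ⟶ b) → Prop)
    (R : ∀ ⦃a b : C⦄, CerfChain S a b → CerfChain S a b → Prop)
    -- `(S, R)` makes `C` a category with Cerf decompositions:
    (hRsymm : ∀ ⦃a b : C⦄ (p q : CerfChain S a b), R p q → R q p)
    (hRcomp : ∀ ⦃a b : C⦄ (p q : CerfChain S a b), R p q → p.comp = q.comp)
    (hgen : ∀ ⦃a b : C⦄ (f : a ⟶ b), ∃ p : CerfChain S a b, p.comp = f)
    (hmoves : ∀ ⦃a b : C⦄ (p q : CerfChain S a b), p.comp = q.comp →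
      Relation.ReflTransGen (fun p q => CerfElemMove R p q) p q)
    -- the data of a Cerf-compatible partial functor:
    (F₀ : C → D)
    (F₁ : ∀ {a b : C} (f : a ⟶ b), S f → (F₀ a ⟶ F₀ b))
    (hF : ∀ ⦃a b : C⦄ (p q : CerfChain S a b), R p q →
      p.mapComp F₀ F₁ = q.mapComp F₀ F₁) :
    ∃! F : C ⥤ D,
      ∃ h : ∀ a : C, F.obj a = F₀ a,
        ∀ {a b : C} (f : a ⟶ b) (hf : S f),
          F.map f = eqToHom (h a) ≫ F₁ f hf ≫ eqToHom (h b).symm := by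
  -- mapComp is invariant under elementary moves
  have hmove : ∀ ⦃a b : C⦄ (p q : CerfChain S a b), CerfElemMove R p q →
      p.mapComp F₀ F₁ = q.mapComp F₀ F₁ := by
    rintro a b p q ⟨u, v, p₁, r, r', p₂, hR, rfl, rfl⟩
    simp [CerfChain.mapComp_append, hF _ _ hR]
  have key : ∀ ⦃a b : C⦄ (p q : CerfChain S a b), p.comp = q.comp →
      p.mapComp F₀ F₁ = q.mapComp F₀ F₁ := by
    intro a b p q h
    have hrt := hmoves p q h
    clear h
    induction hrt with
    | refl => rfl
    | tail _ hm ih => exact ih.trans (hmove _ _ hm)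
  -- the candidate map
  let Fmap : ∀ {a b : C}, (a ⟶ b) → (F₀ a ⟶ F₀ b) :=
    fun {a b} f => (hgen f).choose.mapComp F₀ F₁
  have Fspec : ∀ {a b : C} (f : a ⟶ b) (p : CerfChain S a b), p.comp = f →
      Fmap f = p.mapComp F₀ F₁ := by
    intro a b f p hp
    exact key _ _ ((hgen f).choose_spec.trans hp.symm)
  let F : C ⥤ D :=
    { obj := F₀
      map := fun f => Fmap f
      map_id := fun a => by
        show Fmap (𝟙 a) = 𝟙 (F₀ a)
        rw [Fspec (𝟙 a) (CerfChain.nil a) rfl]; rfl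
      map_comp := fun {a b c} f g => by
        show Fmap (f ≫ g) = Fmap f ≫ Fmap g
        obtain ⟨p, hp⟩ := hgen f
        obtain ⟨q, hq⟩ := hgen g
        rw [Fspec f p hp, Fspec g q hq,
          Fspec (f ≫ g) (p.append q) (by rw [CerfChain.comp_append, hp, hq]),
          CerfChain.mapComp_append] }
  refine ⟨F, ⟨fun a => rfl, ?_⟩, ?_⟩
  · intro a b f hf
    have : Fmap f = F₁ f hf ≫ 𝟙 (F₀ b) :=
      Fspec f (CerfChain.cons f hf (CerfChain.nil b)) (by simp [CerfChain.comp])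
    simpa [F] using this
  · rintro G ⟨h, hGmap⟩
    have hchain : ∀ {a b : C} (p : CerfChain S a b),
        G.map p.comp = eqToHom (h a) ≫ p.mapComp F₀ F₁ ≫ eqToHom (h b).symm := by
      intro a b p
      induction p with
      | nil a => simp [CerfChain.comp, CerfChain.mapComp]
      | cons f hf p ih =>
        simp only [CerfChain.comp, CerfChain.mapComp, G.map_comp, ih, hGmap f hf]
        simp
    refine CategoryTheory.Functor.ext h (fun a b f => ?_)
    obtain ⟨p, hp⟩ := hgen f
    have h1 := hchain p
    rw [hp] at h1
    have h2 : F.map f = p.mapComp F₀ F₁ := Fspec f p hp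
    rw [h1, h2]
end

section
/- Let m ≥ 2, let X be a type, let A, B ⊆ X be disjoint subsets, and let p_A : Aᶜ → X_A and p_B : Bᶜ → X_B be injective maps. Set B' := p_A(B) ⊆ X_A and A' := p_B(A) ⊆ X_B, and let q_{B'} : (B')ᶜ → X_{AB} and q_{A'} : (A')ᶜ → X_{BA} be maps defined on the respective complements. Let φ'' : X_{AB} → X_{BA} be any map satisfying φ''(q_{B'}(p_A(w))) = q_{A'}(p_B(w)) for every w ∈ X with w ∉ A ∪ B. Then the image of the composed correspondence L(A, p_A) ∘ L(B', q_{B'}) ⊆ Sym X m × Sym X_{AB} (m-2) under the map (id × Sym.map φ'') equals the composed correspondence L(B, p_B) ∘ L(A', q_{A'}) ⊆ Sym X m × Sym X_{BA} (m-2). -/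
/-- The set-level handle-attachment correspondence: pairs
`(⟦x₁, …, x_m⟧, ⟦p_A x₂, …, p_A x_m⟧)` with `x₁ ∈ A` and `x_i ∉ A` for `i ≥ 2`. -/
def HandleCorr {X XA : Type*} (A : Set X) (pA : (Aᶜ : Set X) → XA) (m : ℕ) :
    Set (Sym X m × Sym XA (m - 1)) :=
  { yx | ∃ (a : X) (_ : a ∈ A) (s : Multiset X) (hs : ∀ w ∈ s, w ∈ Aᶜ),
      (yx.1 : Multiset X) = a ::ₘ s ∧
      (yx.2 : Multiset XA) = s.pmap (fun w hw => pA ⟨w, hw⟩) hs }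

/-- The composition of two set-level correspondences. -/
def RelComp {S T U : Type*} (L : Set (S × T)) (L' : Set (T × U)) : Set (S × U) :=
  { su | ∃ t : T, (su.1, t) ∈ L ∧ (t, su.2) ∈ L' }

/-!
Composing `L(A, p_A)` with `L(p_A(B), q)` splits off from `⟦x₁, …, x_m⟧` first a point `a ∈ A`
and then a point `x ∉ A` with `p_A x ∈ p_A(B)`, and sends the remaining points through
`q ∘ p_A`. When `p_A` is injective this just says `x ∈ B`, and the remaining points are
exactly those avoiding `A ∪ B`. The resulting description is symmetric in `A` and `B` except
for the map applied to the remaining points, and the compatibility condition on `φ''` says that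
`φ''` converts one map into the other.
-/

open Multiset

theorem Multiset.pmap_pmap {α β γ : Type*} {p : α → Prop} {q : β → Prop} (g : ∀ a, p a → β)
    (f : ∀ b, q b → γ) (s : Multiset α) (H₁ : ∀ a ∈ s, p a) (H₂ : ∀ b ∈ s.pmap g H₁, q b) :
    (s.pmap g H₁).pmap f H₂ =
      s.pmap (fun a (h : ∃ h : p a, q (g a h)) => f (g a h.fst) h.snd)
        (fun a ha => ⟨H₁ a ha, H₂ _ (mem_pmap.2 ⟨a, ha, rfl⟩)⟩) := by
  induction s using Multiset.induction_on with
  | empty => rfl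
  | cons a s ih => simp only [pmap_cons]; exact congrArg _ (ih _ _)

theorem mem_relComp_handleCorr_iff {X Y Z : Type*} {A : Set X} {p : (Aᶜ : Set X) → Y}
    {B' : Set Y} {q : (B'ᶜ : Set Y) → Z} {m : ℕ} {y : Sym X m} {u : Sym Z (m - 1 - 1)} :
    (y, u) ∈ RelComp (HandleCorr A p m) (HandleCorr B' q (m - 1)) ↔
      ∃ a ∈ A, ∃ x : (Aᶜ : Set X), p x ∈ B' ∧
        ∃ (s : Multiset X) (hs : ∀ w ∈ s, ∃ h : w ∈ Aᶜ, p ⟨w, h⟩ ∈ B'ᶜ),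
          (y : Multiset X) = a ::ₘ x ::ₘ s ∧
          (u : Multiset Z) = s.pmap (fun w hw => q ⟨p ⟨w, hw.fst⟩, hw.snd⟩) hs := by
  constructor
  · rintro ⟨t, ⟨a, ha, s₁, hs₁, hy, ht⟩, ⟨b, hb, s', hs', ht', hu⟩⟩
    change (t : Multiset Y) = _ at ht ht'
    obtain ⟨x, hx, rfl⟩ := mem_pmap.mp (ht ▸ ht' ▸ mem_cons_self b s')
    obtain ⟨s, rfl⟩ := exists_cons_of_mem hx
    rw [pmap_cons, ht', cons_inj_right] at ht
    subst ht
    rw [pmap_pmap] at hu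
    exact ⟨a, ha, _, hb, s, _, hy, hu⟩
  · rintro ⟨a, ha, x, hx, s, hs, hy, hu⟩
    have hcard : card s + 2 = m := by
      rw [← (Sym.card_coe : card (y : Multiset X) = m), hy, card_cons, card_cons]
    have hsA : ∀ w ∈ s, w ∈ Aᶜ := fun w hw => (hs w hw).fst
    have hxs : ∀ w ∈ (x : X) ::ₘ s, w ∈ Aᶜ := by
      simpa only [forall_mem_cons] using ⟨x.2, hsA⟩
    refine ⟨Sym.mk (((x : X) ::ₘ s).pmap (fun w hw => p ⟨w, hw⟩) hxs)
        (by rw [card_pmap, card_cons]; omega),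
      ⟨a, ha, _, hxs, hy, rfl⟩, ⟨p x, hx, s.pmap (fun w hw => p ⟨w, hw⟩) hsA, ?_, pmap_cons .., ?_⟩⟩
    · intro z hz
      obtain ⟨w, hw, rfl⟩ := mem_pmap.mp hz
      exact (hs w hw).snd
    · exact hu.trans (pmap_pmap (fun w hw => p ⟨w, hw⟩) (fun z hz => q ⟨z, hz⟩) s hsA _).symm

theorem Multiset.map_pmap_eq_pmap {α β γ : Type*} {p q : α → Prop} {f : ∀ a, p a → β}
    {g : ∀ a, q a → γ} {φ : β → γ} (h : ∀ a hp hq, φ (f a hp) = g a hq) (s : Multiset α)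
    (Hp : ∀ a ∈ s, p a) (Hq : ∀ a ∈ s, q a) : (s.pmap f Hp).map φ = s.pmap g Hq := by
  rw [map_pmap]
  exact pmap_congr s fun a _ => h a

theorem exists_mem_compl_image_preimage_iff {X Y : Type*} {A B : Set X} {p : (Aᶜ : Set X) → Y}
    (hp : Function.Injective p) {w : X} :
    (∃ h : w ∈ Aᶜ, p ⟨w, h⟩ ∈ (p '' (Subtype.val ⁻¹' B))ᶜ) ↔ w ∉ A ∧ w ∉ B := by
  simp [hp.mem_set_image]

theorem handleCorr_comp_equivariance_general {X XA XB XAB XBA : Type*} {m : ℕ}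
    {A B : Set X} (hdisj : Disjoint A B)
    {pA : (Aᶜ : Set X) → XA} {pB : (Bᶜ : Set X) → XB}
    (hpA : Function.Injective pA) (hpB : Function.Injective pB)
    (qB' : (((pA '' (Subtype.val ⁻¹' B))ᶜ : Set XA)) → XAB)
    (qA' : (((pB '' (Subtype.val ⁻¹' A))ᶜ : Set XB)) → XBA)
    (φ'' : XAB → XBA)
    (hφ : ∀ (w : X) (hwA : w ∈ Aᶜ) (hwB : w ∈ Bᶜ)
        (h1 : pA ⟨w, hwA⟩ ∈ (pA '' (Subtype.val ⁻¹' B))ᶜ)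
        (h2 : pB ⟨w, hwB⟩ ∈ (pB '' (Subtype.val ⁻¹' A))ᶜ),
        φ'' (qB' ⟨pA ⟨w, hwA⟩, h1⟩) = qA' ⟨pB ⟨w, hwB⟩, h2⟩) :
    Prod.map id (Sym.map φ'') ''
        RelComp (HandleCorr A pA m)
          (HandleCorr (pA '' (Subtype.val ⁻¹' B)) qB' (m - 1)) =
      (RelComp (HandleCorr B pB m)
          (HandleCorr (pB '' (Subtype.val ⁻¹' A)) qA' (m - 1)) :
        Set (Sym X m × Sym XBA (m - 2))) := by
  have hcompl : ∀ w, (∃ h : w ∈ Aᶜ, pA ⟨w, h⟩ ∈ (pA '' (Subtype.val ⁻¹' B))ᶜ) ↔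
      ∃ h : w ∈ Bᶜ, pB ⟨w, h⟩ ∈ (pB '' (Subtype.val ⁻¹' A))ᶜ := fun w => by
    rw [exists_mem_compl_image_preimage_iff hpA, exists_mem_compl_image_preimage_iff hpB, and_comm]
  ext ⟨y, u⟩
  simp only [Set.mem_image, Prod.exists, Prod.map, id, Prod.mk.injEq]
  constructor
  · rintro ⟨_, u', h, rfl, rfl⟩
    obtain ⟨a, ha, x, hx, s, hs, hy, hu⟩ := mem_relComp_handleCorr_iff.mp h
    have haB : a ∈ Bᶜ := hdisj.notMem_of_mem_left ha
    refine mem_relComp_handleCorr_iff.mpr ⟨x, hpA.mem_set_image.mp hx, ⟨a, haB⟩,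
      ⟨⟨a, haB⟩, ha, rfl⟩, s, fun w hw => (hcompl w).mp (hs w hw), hy.trans (cons_swap ..), ?_⟩
    rw [Sym.coe_map, hu]
    exact map_pmap_eq_pmap (fun w h₁ h₂ => hφ w h₁.fst h₂.fst h₁.snd h₂.snd) s _ _
  · intro h
    obtain ⟨b, hb, x, hx, s, hs, hy, hu⟩ := mem_relComp_handleCorr_iff.mp h
    have hbA : b ∈ Aᶜ := hdisj.notMem_of_mem_right hb
    have hs' := fun w hw => (hcompl w).mpr (hs w hw)
    have hcard : card s = m - 1 - 1 := by rw [← card_pmap _ s hs, ← hu, Sym.card_coe]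
    refine ⟨y, Sym.mk _ ((card_pmap _ s hs').trans hcard),
      mem_relComp_handleCorr_iff.mpr ⟨x, hpB.mem_set_image.mp hx, ⟨b, hbA⟩,
        ⟨⟨b, hbA⟩, hb, rfl⟩, s, hs', hy.trans (cons_swap ..), rfl⟩, rfl, Sym.coe_injective ?_⟩
    rw [Sym.coe_map, hu]
    exact map_pmap_eq_pmap (fun w h₁ h₂ => hφ w h₁.fst h₂.fst h₁.snd h₂.snd) s _ _

/-- for disjoint attaching sets `A, B ⊆ X`, with `B' = p_A(B)`, `A' = p_B(A)`
and any map `φ'' : X_AB → X_BA` satisfying `φ''(q_{B'}(p_A w)) = q_{A'}(p_B w)` for all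
`w ∉ A ∪ B`, the image of the composed correspondence `L(A, p_A) ∘ L(B', q_{B'})` under
`id × Sym.map φ''` equals the composed correspondence `L(B, p_B) ∘ L(A', q_{A'})`. -/
theorem handleCorr_comp_equivariance {X XA XB XAB XBA : Type*} {m : ℕ} (hm : 2 ≤ m)
    {A B : Set X} (hdisj : Disjoint A B)
    {pA : (Aᶜ : Set X) → XA} {pB : (Bᶜ : Set X) → XB}
    (hpA : Function.Injective pA) (hpB : Function.Injective pB)
    (qB' : (((pA '' (Subtype.val ⁻¹' B))ᶜ : Set XA)) → XAB)
    (qA' : (((pB '' (Subtype.val ⁻¹' A))ᶜ : Set XB)) → XBA)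
    (φ'' : XAB → XBA)
    (hφ : ∀ (w : X) (hwA : w ∈ Aᶜ) (hwB : w ∈ Bᶜ)
        (h1 : pA ⟨w, hwA⟩ ∈ (pA '' (Subtype.val ⁻¹' B))ᶜ)
        (h2 : pB ⟨w, hwB⟩ ∈ (pB '' (Subtype.val ⁻¹' A))ᶜ),
        φ'' (qB' ⟨pA ⟨w, hwA⟩, h1⟩) = qA' ⟨pB ⟨w, hwB⟩, h2⟩) :
    Prod.map id (Sym.map φ'') ''
        RelComp (HandleCorr A pA m)
          (HandleCorr (pA '' (Subtype.val ⁻¹' B)) qB' (m - 1)) =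
      (RelComp (HandleCorr B pB m)
          (HandleCorr (pB '' (Subtype.val ⁻¹' A)) qA' (m - 1)) :
        Set (Sym X m × Sym XBA (m - 2))) :=
  handleCorr_comp_equivariance_general hdisj hpA hpB qB' qA' φ'' hφ
end

section
/- Let m ≥ 2, let X be a type, let A, B ⊆ X be disjoint subsets, and let p_A : Aᶜ → X_A and p_B : Bᶜ → X_B be injective maps. If y, y' ∈ Sym X m, x ∈ Sym X_A (m-1) and z ∈ Sym X_B (m-1) satisfy (y, x) ∈ L(A, p_A), (y', x) ∈ L(A, p_A), (y, z) ∈ L(B, p_B) and (y', z) ∈ L(B, p_B), then y = y'. In other words, in the composed correspondence L(A, p_A)ᵀ ∘ L(B, p_B) ⊆ Sym X_A (m-1) × Sym X_B (m-1), the intermediate element of Sym X m is uniquely determined by the pair (x, z), so the projection defining this geometric composition is injective. -/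
/-- The transpose of a set-level correspondence. -/
def RelTrans {S T : Type*} (L : Set (S × T)) : Set (T × S) :=
  { ts | (ts.2, ts.1) ∈ L }

private lemma pmap_inj_aux {X XA : Type*} {A : Set X} {pA : ↥A → XA}
    (hpA : Function.Injective pA) {s s' : Multiset X}
    (hs : ∀ w ∈ s, w ∈ A) (hs' : ∀ w ∈ s', w ∈ A)
    (h : s.pmap (fun w hw => pA ⟨w, hw⟩) hs = s'.pmap (fun w hw => pA ⟨w, hw⟩) hs') :
    s = s' := by
  have e1 : s.pmap (fun w hw => pA ⟨w, hw⟩) hs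
      = (s.pmap (fun w hw => (⟨w, hw⟩ : A)) hs).map pA := by
    rw [Multiset.map_pmap]
  have e1' : s'.pmap (fun w hw => pA ⟨w, hw⟩) hs'
      = (s'.pmap (fun w hw => (⟨w, hw⟩ : A)) hs').map pA := by
    rw [Multiset.map_pmap]
  rw [e1, e1'] at h
  have h2 := Multiset.map_injective hpA h
  have : ((s.pmap (fun w hw => (⟨w, hw⟩ : A)) hs).map Subtype.val)
      = ((s'.pmap (fun w hw => (⟨w, hw⟩ : A)) hs').map Subtype.val) := by rw [h2]
  simpa [Multiset.map_pmap, Multiset.pmap_eq_map] using this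

/-- for disjoint subsets `A, B ⊆ X` and injective maps `p_A, p_B` defined on
their complements, the intermediate element of `Sym X m` in the composed correspondence
`L(A, p_A)ᵀ ∘ L(B, p_B)` is uniquely determined: if `(y, x), (y', x) ∈ L(A, p_A)` and
`(y, z), (y', z) ∈ L(B, p_B)` then `y = y'`. -/
theorem handleCorr_intermediate_unique {X XA XB : Type*} {m : ℕ} (hm : 2 ≤ m)
    {A B : Set X} (hdisj : Disjoint A B)
    {pA : (Aᶜ : Set X) → XA} {pB : (Bᶜ : Set X) → XB}
    (hpA : Function.Injective pA) (hpB : Function.Injective pB)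
    (y y' : Sym X m) (x : Sym XA (m - 1)) (z : Sym XB (m - 1))
    (h1 : (y, x) ∈ HandleCorr A pA m) (h2 : (y', x) ∈ HandleCorr A pA m)
    (h3 : (y, z) ∈ HandleCorr B pB m) (h4 : (y', z) ∈ HandleCorr B pB m) :
    y = y' := by
  classical
  obtain ⟨a, ha, s, hs, hy, hx⟩ := h1
  obtain ⟨a', ha', s', hs', hy', hx'⟩ := h2
  obtain ⟨b, hb, t, ht, hyt, hz⟩ := h3
  obtain ⟨b', hb', t', ht', hyt', hz'⟩ := h4
  have hss : s = s' := pmap_inj_aux hpA hs hs' (hx ▸ hx')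
  have htt : t = t' := pmap_inj_aux hpB ht ht' (hz ▸ hz')
  subst hss htt
  have hbA : b ∉ A := fun h => hdisj.ne_of_mem h hb rfl
  have hb'A : b' ∉ A := fun h => hdisj.ne_of_mem h hb' rfl
  have key : ∀ (c : X) (u : Multiset X), c ∈ A → (∀ w ∈ u, w ∈ Aᶜ) →
      Multiset.filter (· ∈ A) (c ::ₘ u) = {c} := by
    intro c u hc hu
    rw [Multiset.filter_cons_of_pos _ hc, Multiset.filter_eq_nil.2 (fun w hw => hu w hw)]
    rfl
  have e1 : Multiset.filter (· ∈ A) t = {a} := by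
    have := key a s ha hs
    rw [← hy, hyt, Multiset.filter_cons_of_neg _ hbA] at this
    exact this
  have e2 : Multiset.filter (· ∈ A) t = {a'} := by
    have := key a' s ha' hs'
    rw [← hy', hyt', Multiset.filter_cons_of_neg _ hb'A] at this
    exact this
  have : a = a' := by
    have := e1.symm.trans e2
    simpa using this
  subst this
  exact Subtype.ext (hy.trans hy'.symm)
end

section
/- Let m ≥ 1, let X be a type, let φ : X → X be a bijection, let A ⊆ X be a subset, let p_A : Aᶜ → X_A and p' : (φ(A))ᶜ → X'_A be maps, and let φ' : X_A → X'_A be a map satisfying φ'(p_A(w)) = p'(φ(w)) for all w ∈ X with w ∉ A. Then the image of the correspondence L(A, p_A) ⊆ Sym X m × Sym X_A (m-1) under the product map Sym.map φ × Sym.map φ' equals the correspondence L(φ(A), p') ⊆ Sym X m × Sym X'_A (m-1). -/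
section

variable {X Y XA YA : Type*} {φ : X → Y} {A : Set X} {pA : (Aᶜ : Set X) → XA} {φ' : XA → YA}

theorem Multiset.map_pmap_eq_pmap_map {B : Set Y} {pB : (Bᶜ : Set Y) → YA}
    (hcomm : ∀ (w : X) (hw : w ∈ Aᶜ) (hw' : φ w ∈ Bᶜ), φ' (pA ⟨w, hw⟩) = pB ⟨φ w, hw'⟩)
    (s : Multiset X) (hs : ∀ w ∈ s, w ∈ Aᶜ) (hs' : ∀ w ∈ s.map φ, w ∈ Bᶜ) :
    (s.pmap (fun w hw => pA ⟨w, hw⟩) hs).map φ' =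
      (s.map φ).pmap (fun w hw => pB ⟨w, hw⟩) hs' := by
  induction s using Multiset.induction_on with
  | empty => rfl
  | cons a s ih =>
    simp only [Multiset.pmap_cons, Multiset.map_cons]
    exact congr_arg₂ _ (hcomm ..) (ih ..)

theorem image_handleCorr_subset {pB : ((φ '' A)ᶜ : Set Y) → YA} (hφ : φ.Injective)
    (hcomm : ∀ (w : X) (hw : w ∈ Aᶜ) (hw' : φ w ∈ (φ '' A)ᶜ),
      φ' (pA ⟨w, hw⟩) = pB ⟨φ w, hw'⟩) (m : ℕ) :
    Prod.map (Sym.map φ) (Sym.map φ') '' HandleCorr A pA m ⊆ HandleCorr (φ '' A) pB m := by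
  rintro _ ⟨⟨y, x⟩, ⟨a, ha, s, hs, hy, hx⟩, rfl⟩
  have hs' : ∀ w ∈ s.map φ, w ∈ (φ '' A)ᶜ := by
    simpa only [Multiset.forall_mem_map_iff, Set.mem_compl_iff, hφ.mem_set_image] using hs
  refine ⟨φ a, Set.mem_image_of_mem φ ha, s.map φ, hs', ?_, ?_⟩
  · simp [hy]
  · simp only [Prod.map_snd, Sym.coe_map, hx]
    exact s.map_pmap_eq_pmap_map hcomm hs hs'

theorem handleCorr_subset_image {pB : ((φ '' A)ᶜ : Set Y) → YA} (hφ : φ.Surjective)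
    (hcomm : ∀ (w : X) (hw : w ∈ Aᶜ) (hw' : φ w ∈ (φ '' A)ᶜ),
      φ' (pA ⟨w, hw⟩) = pB ⟨φ w, hw'⟩) (m : ℕ) :
    HandleCorr (φ '' A) pB m ⊆ Prod.map (Sym.map φ) (Sym.map φ') '' HandleCorr A pA m := by
  rintro ⟨y, x⟩ ⟨_, ⟨a, ha, rfl⟩, s', hs', (hy : (y : Multiset Y) = _),
    (hx : (x : Multiset YA) = _)⟩
  obtain ⟨s, rfl⟩ := Multiset.map_surjective_of_surjective hφ s'
  have hs : ∀ w ∈ s, w ∈ Aᶜ := fun w hw hwA =>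
    hs' (φ w) (Multiset.mem_map_of_mem φ hw) (Set.mem_image_of_mem φ hwA)
  refine ⟨(⟨a ::ₘ s, ?_⟩, ⟨s.pmap (fun w hw => pA ⟨w, hw⟩) hs, ?_⟩), ⟨a, ha, s, hs, rfl, rfl⟩, ?_⟩
  · simpa [hy] using y.card_coe
  · simpa [hx] using x.card_coe
  · refine Prod.ext (Sym.ext ?_) (Sym.ext ?_)
    · simp [hy]
    · simp only [Prod.map_snd, hx]
      exact s.map_pmap_eq_pmap_map hcomm hs hs'

end

theorem handleCorr_equivariance_general {X XA X'A : Type*} {m : ℕ}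
    (φ : X → X) (hφ : Function.Bijective φ)
    {A : Set X} (pA : (Aᶜ : Set X) → XA) (p' : ((φ '' A)ᶜ : Set X) → X'A)
    (φ' : XA → X'A)
    (hcomm : ∀ (w : X) (hw : w ∈ Aᶜ) (hw' : φ w ∈ (φ '' A)ᶜ),
        φ' (pA ⟨w, hw⟩) = p' ⟨φ w, hw'⟩) :
    Prod.map (Sym.map φ) (Sym.map φ') '' HandleCorr A pA m =
      HandleCorr (φ '' A) p' m :=
  (image_handleCorr_subset hφ.1 hcomm m).antisymm (handleCorr_subset_image hφ.2 hcomm m)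

/-- equivariance of the handle-attachment correspondences.  For a bijection
`φ : X → X` and maps `p_A : Aᶜ → X_A`, `p' : (φ(A))ᶜ → X'_A` intertwined by
`φ' : X_A → X'_A` (i.e. `φ'(p_A w) = p'(φ w)` for `w ∉ A`), the image of `L(A, p_A)` under
`Sym.map φ × Sym.map φ'` equals `L(φ(A), p')`. -/
theorem handleCorr_equivariance {X XA X'A : Type*} {m : ℕ} (hm : 1 ≤ m)
    (φ : X → X) (hφ : Function.Bijective φ)
    {A : Set X} (pA : (Aᶜ : Set X) → XA) (p' : ((φ '' A)ᶜ : Set X) → X'A)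
    (φ' : XA → X'A)
    (hcomm : ∀ (w : X) (hw : w ∈ Aᶜ) (hw' : φ w ∈ (φ '' A)ᶜ),
        φ' (pA ⟨w, hw⟩) = p' ⟨φ w, hw'⟩) :
    Prod.map (Sym.map φ) (Sym.map φ') '' HandleCorr A pA m =
      HandleCorr (φ '' A) p' m :=
  handleCorr_equivariance_general φ hφ pA p' φ' hcomm
end
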